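/- arXiv:2409.20338 — 4 statements merged into one kernel-verified Lean document; each statement's English description precedes it below -/
import Mathlib

section
/- Let n ≥ 1 be a natural number, R a commutative ring, and h : Fin n → R. Then ∑_{σ ∈ Perm(Fin n)} sign(σ) · ∏_{i ∈ Fin n} ∏_{j=0}^{n - 2 - σ(i)} (h(i) - j) = ∏_{i < j} (h(i) - h(j)), where for each i the inner product runs over the n - 1 - σ(i) integers j = 0, 1, ..., n - 2 - σ(i) (an empty product, equal to 1, when σ(i) = n - 1), with σ(i) ∈ {0, ..., n-1} regarded as a natural number. -/
open Polynomial Finset Matrix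

theorem pairs_prod_eq {R : Type*} [CommRing R] {n : ℕ} (f : Fin n → Fin n → R) :
    ∏ p ∈ Finset.univ.filter (fun p : Fin n × Fin n => p.1 < p.2), f p.1 p.2 =
      ∏ i, ∏ j ∈ Finset.Ioi i, f i j := by
  rw [Finset.prod_sigma']
  apply Finset.prod_nbij' (fun p => ⟨p.1, p.2⟩) (fun p => (p.1, p.2)) <;>
    simp [Finset.mem_sigma, Finset.mem_Ioi]

/-- Alternating sum over permutations of products of falling factorials equals
the Vandermonde product: `∑_σ sign(σ) ∏_i ∏_{j=0}^{n-2-σ(i)} (h i - j)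
= ∏_{i<j} (h i - h j)`. -/
theorem falling_factorial_vandermonde {R : Type*} [CommRing R] (n : ℕ) (hn : 1 ≤ n)
    (h : Fin n → R) :
    ∑ σ : Equiv.Perm (Fin n), ((Equiv.Perm.sign σ : ℤ) : R) *
        ∏ i, ∏ j ∈ Finset.range (n - 1 - (σ i : ℕ)), (h i - (j : R)) =
      ∏ p ∈ Finset.univ.filter (fun p : Fin n × Fin n => p.1 < p.2), (h p.1 - h p.2) := by
  nontriviality R
  classical
  set p : Fin n → R[X] := fun j => ∏ k ∈ Finset.range j, (X - C (k : R)) with hp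
  have hdeg : ∀ j : Fin n, (p j).natDegree = j := by
    intro j
    rw [hp]
    rw [Polynomial.natDegree_prod_of_monic _ _ (fun k _ => Polynomial.monic_X_sub_C _)]
    simp only [Polynomial.natDegree_X_sub_C]
    simp
  have hmonic : ∀ j : Fin n, (p j).Monic := fun j =>
    Polynomial.monic_prod_of_monic _ _ (fun k _ => Polynomial.monic_X_sub_C _)
  set A : Matrix (Fin n) (Fin n) R := Matrix.of (fun i j => (p j).eval (h i)) with hA
  have hAeval : ∀ (i j : Fin n), A i j = ∏ k ∈ Finset.range j, (h i - (k : R)) := by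
    intro i j
    simp [hA, hp, Polynomial.eval_prod]
  -- LHS is the determinant of A with columns reversed
  have hrev : ∀ j : Fin n, ((Fin.revPerm j : Fin n) : ℕ) = n - 1 - (j : ℕ) := by
    intro j
    simp [Fin.rev]
    omega
  have hL : ∑ σ : Equiv.Perm (Fin n), ((Equiv.Perm.sign σ : ℤ) : R) *
        ∏ i, ∏ j ∈ Finset.range (n - 1 - (σ i : ℕ)), (h i - (j : R)) =
      ((A.submatrix id Fin.revPerm)ᵀ).det := by
    rw [Matrix.det_apply']
    refine Finset.sum_congr rfl fun σ _ => ?_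
    congr 1
    refine Finset.prod_congr rfl fun i _ => ?_
    simp only [Matrix.transpose_apply, Matrix.submatrix_apply, id]
    rw [hAeval, hrev]
  rw [hL, Matrix.det_transpose, Matrix.det_permute',
    ← Matrix.det_eval_matrixOfPolynomials_eq_det_vandermonde h p hdeg hmonic]
  -- Now relate to the Vandermonde determinant of `h ∘ Fin.rev`
  have hV : (Matrix.vandermonde (h ∘ Fin.rev)).det =
      ((Equiv.Perm.sign (Fin.revPerm (n := n)) : ℤ) : R) * (Matrix.vandermonde h).det := by
    have : Matrix.vandermonde (h ∘ Fin.rev) =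
        (Matrix.vandermonde h).submatrix Fin.revPerm id := by
      ext i j; simp [Matrix.vandermonde]
    rw [this, Matrix.det_permute]
  rw [← hV, Matrix.det_vandermonde, pairs_prod_eq (fun i j => h i - h j)]
  -- reindex the double product via `Fin.rev`
  rw [Finset.prod_sigma', Finset.prod_sigma']
  apply Finset.prod_nbij' (fun q => ⟨Fin.rev q.2, Fin.rev q.1⟩)
    (fun q => ⟨Fin.rev q.2, Fin.rev q.1⟩) <;>
    simp [Finset.mem_sigma, Finset.mem_Ioi, Fin.rev_lt_rev]
end

section
/- Let n ≥ 1 be a natural number and λ : Fin n → ℕ (indexed by i = 0, ..., n-1), and set h_i = λ_i + (n - 1) - i, a natural number. Then, as rational numbers, ∑_{σ ∈ Perm(Fin n)} sign(σ) · ∏_{i} T_i(σ) = ( ∏_{i < j} (h_i - h_j) ) / ( ∏_{i} h_i! ), where T_i(σ) = 1/(λ_i + σ(i) - i)! if the integer λ_i + σ(i) - i is nonnegative, and T_i(σ) = 0 otherwise (σ(i) ∈ {0,...,n-1} regarded as an integer). In particular, multiplying through by (∑_i λ_i)! shows that the alternating sum of multinomial coefficients ∑_{σ} sign(σ) · L!/∏_i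 (λ_i + σ(i) - i)! equals the hook-length formula L!/(∏_i h_i!) · ∏_{i<j}(h_i - h_j), with L = ∑_i λ_i. -/
/-!
Since `λ i + σ i - i = h i - rev (σ i)`, the entry `T_i(σ)` equals
`(h i).descFactorial (rev (σ i)) / (h i)!`; the falling factorial vanishes exactly where `T_i(σ)`
is set to `0`. So the alternating sum is `(∏ i, (h i)!)⁻¹` times the determinant of
`(h i).descFactorial (rev j)`. As `x.descFactorial k` is a monic polynomial of degree `k` in `x`,
reversing rows and columns turns this determinant into the Vandermonde determinant of the `h i`,
which is `∏_{i<j} (h i - h j)`.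
-/

open Finset Matrix

lemma ite_one_div_factorial_sub_eq {K : Type*} [DivisionRing K] [CharZero K] (a b : ℕ) :
    (if 0 ≤ (a : ℤ) - b then (1 : K) / ((((a : ℤ) - b).toNat.factorial : ℕ) : K) else 0) =
      (a.descFactorial b : K) / a.factorial := by
  split_ifs with hba
  · have hba : b ≤ a := by omega
    rw [show ((a : ℤ) - b).toNat = a - b by omega, ← Nat.factorial_mul_descFactorial hba,
      Nat.cast_mul, div_mul_cancel_right₀ (mod_cast (Nat.descFactorial_eq_zero_iff_lt.not.mpr
        (Nat.not_lt.mpr hba))), one_div]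
  · rw [Nat.descFactorial_eq_zero_iff_lt.mpr (by omega), Nat.cast_zero, zero_div]

lemma Fin.prod_filter_lt_eq_prod_Ioi_rev {M : Type*} [CommMonoid M] {n : ℕ}
    (f : Fin n → Fin n → M) :
    ∏ p ∈ univ.filter (fun p : Fin n × Fin n => p.1 < p.2), f p.1 p.2 =
      ∏ i, ∏ j ∈ Ioi i, f (rev j) (rev i) := by
  rw [prod_finset_product_right _ univ (fun j => Iio j) (by simp),
    ← Equiv.prod_comp Fin.revPerm]
  refine prod_congr rfl fun i _ => ?_
  rw [revPerm_apply, ← map_revPerm_Ioi, prod_map]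
  rfl

namespace Matrix

variable {R : Type*} [CommRing R] {n : ℕ}

lemma det_of_eq_sum_sign_mul_prod {ι : Type*} [Fintype ι] [DecidableEq ι] (f : ι → ι → R) :
    det (of f) = ∑ σ : Equiv.Perm ι, ((Equiv.Perm.sign σ : ℤ) : R) * ∏ i, f i (σ i) := by
  rw [← det_transpose, det_apply']
  rfl

lemma det_descFactorial [IsDomain R] (v : Fin n → ℕ) :
    det (of fun i j : Fin n => ((v i).descFactorial j : R)) =
      ∏ i, ∏ j ∈ Ioi i, ((v j : R) - v i) := by
  rw [← det_vandermonde, det_eval_matrixOfPolynomials_eq_det_vandermonde _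
    (fun j => descPochhammer R j) (fun j => descPochhammer_natDegree R j)
    (fun j => monic_descPochhammer R j)]
  simp only [descPochhammer_eval_eq_descFactorial]

lemma det_descFactorial_rev [IsDomain R] (v : Fin n → ℕ) :
    det (of fun i j : Fin n => ((v i).descFactorial (Fin.rev j) : R)) =
      ∏ p ∈ univ.filter (fun p : Fin n × Fin n => p.1 < p.2), ((v p.1 : R) - v p.2) := by
  rw [← det_submatrix_equiv_self Fin.revPerm,
    Fin.prod_filter_lt_eq_prod_Ioi_rev fun a b => (v a : R) - v b,
    ← det_descFactorial fun i => v (Fin.rev i)]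
  congr 1
  ext i j
  simp only [submatrix_apply, of_apply, Fin.revPerm_apply, Fin.rev_rev]

end Matrix

theorem hook_length_from_counting_formula_general (n : ℕ) (lam : Fin n → ℕ)
    (h : Fin n → ℕ) (hh : ∀ i : Fin n, h i = lam i + (n - 1) - (i : ℕ)) :
    ∑ σ : Equiv.Perm (Fin n), ((Equiv.Perm.sign σ : ℤ) : ℚ) *
        ∏ i, (if 0 ≤ (lam i : ℤ) + ((σ i : ℕ) : ℤ) - ((i : ℕ) : ℤ) then
          (1 : ℚ) / ((((lam i : ℤ) + ((σ i : ℕ) : ℤ) - ((i : ℕ) : ℤ)).toNat.factorial : ℕ) : ℚ)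
          else 0) =
      ((∏ p ∈ Finset.univ.filter (fun p : Fin n × Fin n => p.1 < p.2),
          ((h p.1 : ℤ) - (h p.2 : ℤ)) : ℤ) : ℚ) /
        ((∏ i, (h i).factorial : ℕ) : ℚ) := by
  have hentry : ∀ i j : Fin n,
      (if 0 ≤ (lam i : ℤ) + ((j : ℕ) : ℤ) - ((i : ℕ) : ℤ) then
        (1 : ℚ) /
          ((((lam i : ℤ) + ((j : ℕ) : ℤ) - ((i : ℕ) : ℤ)).toNat.factorial : ℕ) : ℚ)
        else 0) = ((h i).factorial : ℚ)⁻¹ * (h i).descFactorial (Fin.rev j) := by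
    intro i j
    have hshift : (lam i : ℤ) + ((j : ℕ) : ℤ) - ((i : ℕ) : ℤ) =
        (h i : ℤ) - ((Fin.rev j : ℕ) : ℤ) := by
      rw [hh, Fin.val_rev]
      omega
    rw [hshift, ite_one_div_factorial_sub_eq, div_eq_inv_mul]
  simp only [hentry]
  calc _ = det (of fun i j : Fin n =>
          ((h i).factorial : ℚ)⁻¹ * (h i).descFactorial (Fin.rev j)) :=
        (det_of_eq_sum_sign_mul_prod _).symm
    _ = (∏ i, ((h i).factorial : ℚ)⁻¹) *
          ∏ p ∈ univ.filter (fun p : Fin n × Fin n => p.1 < p.2), ((h p.1 : ℚ) - h p.2) := by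
        rw [← det_descFactorial_rev, ← det_mul_column]
        rfl
    _ = _ := by
        push_cast
        rw [prod_inv_distrib, mul_comm, div_eq_mul_inv]

/-- For spin 1/2 the counting formula reproduces the hook-length formula:
with hook lengths `h i = λ i + (n-1) - i`,
`∑_σ sign(σ) ∏_i T_i(σ) = (∏_{i<j} (h i - h j)) / (∏_i (h i)!)`,
where `T_i(σ) = 1/(λ i + σ i - i)!` when `λ i + σ i - i ≥ 0` and `0` otherwise. -/
theorem hook_length_from_counting_formula (n : ℕ) (hn : 1 ≤ n) (lam : Fin n → ℕ)
    (h : Fin n → ℕ) (hh : ∀ i : Fin n, h i = lam i + (n - 1) - (i : ℕ)) :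
    ∑ σ : Equiv.Perm (Fin n), ((Equiv.Perm.sign σ : ℤ) : ℚ) *
        ∏ i, (if 0 ≤ (lam i : ℤ) + ((σ i : ℕ) : ℤ) - ((i : ℕ) : ℤ) then
          (1 : ℚ) / ((((lam i : ℤ) + ((σ i : ℕ) : ℤ) - ((i : ℕ) : ℤ)).toNat.factorial : ℕ) : ℚ)
          else 0) =
      ((∏ p ∈ Finset.univ.filter (fun p : Fin n × Fin n => p.1 < p.2),
          ((h p.1 : ℤ) - (h p.2 : ℤ)) : ℤ) : ℚ) /
        ((∏ i, (h i).factorial : ℕ) : ℚ) :=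
  hook_length_from_counting_formula_general n lam h hh
end

section
/- For every natural number L, ∑_{M2=0}^{L} ∑_{M1=M2}^{⌊(L+M2)/2⌋} ( C(L, M1)·C(M1, M2) - C(L, M1 - 1)·C(M1 - 1, M2) ) · ( L - 2·M1 + M2 + 1 ) = 3^L, computed in the integers, where for M1 = 0 the subtracted term C(L, -1)·C(-1, M2) is 0. -/
/-! Fix `M₂` and put `a m = C(L,m) C(m,M₂)`, which is invariant under `m ↦ L + M₂ - m`. The weight
`L + M₂ - 2M₁ + 1` counts the `m` with `M₁ ≤ m ≤ L + M₂ - M₁`; exchanging the two sums leaves, for each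
such `m`, the telescoping sum of `a M₁ - a (M₁ - 1)` up to `min m (L + M₂ - m)`, which is `a m` by the
symmetry. Summing over `M₂` and exchanging once more gives `∑ₘ C(L,m) 2^m = 3^L`. -/

/-- Integer-valued binomial coefficient: `C(n,k)` for integers `n`, `k`, equal to
`Nat.choose` when `0 ≤ k ≤ n` and `0` otherwise. -/
def intChoose (n k : ℤ) : ℤ := if 0 ≤ k ∧ k ≤ n then n.toNat.choose k.toNat else 0

open Finset

theorem intChoose_natCast (n k : ℕ) : intChoose n k = n.choose k := by
  unfold intChoose
  split_ifs with h
  · simp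
  · rw [Nat.choose_eq_zero_of_lt (by omega), Nat.cast_zero]

theorem intChoose_of_lt {n k : ℤ} (h : n < k) : intChoose n k = 0 :=
  if_neg (by omega)

theorem intChoose_mul_intChoose_reflect (n k : ℕ) (m : ℤ) :
    intChoose n (n + k - m) * intChoose (n + k - m) k = intChoose n m * intChoose m k := by
  rcases lt_or_ge m k with hmk | hkm
  · rw [intChoose_of_lt (by omega : (n : ℤ) < n + k - m), intChoose_of_lt hmk]; ring
  rcases lt_or_ge (n : ℤ) m with hnm | hmn
  · rw [intChoose_of_lt (by omega : (n : ℤ) + k - m < k), intChoose_of_lt hnm]; ring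
  obtain ⟨j, rfl⟩ := Int.eq_ofNat_of_zero_le (by omega : (0 : ℤ) ≤ m)
  have hj : (n : ℤ) + k - j = ((n + k - j : ℕ) : ℤ) := by omega
  simp only [hj, intChoose_natCast]
  norm_cast
  rw [Nat.choose_mul (by omega), Nat.choose_mul (by omega : k ≤ j),
    Nat.choose_symm_of_eq_add (by omega : n - k = (n + k - j - k) + (j - k))]

theorem sum_Icc_sub_pred (a : ℤ → ℤ) {s t : ℕ} (hst : s ≤ t) (hs : a (s - 1) = 0) :
    ∑ k ∈ Icc s t, (a k - a (k - 1)) = a t := by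
  induction t, hst using Nat.le_induction with
  | base => simp [hs]
  | succ t hst ih =>
    rw [sum_Icc_succ_top (by omega), ih, Nat.cast_succ, add_sub_cancel_right, add_sub_cancel]

theorem sum_Icc_sub_pred_mul_eq_sum_of_symm (a : ℤ → ℤ) (N s : ℕ) (hs : a (s - 1) = 0)
    (hsymm : ∀ m, a (N - m) = a m) :
    ∑ k ∈ Icc s (N / 2), (a k - a (k - 1)) * ((N : ℤ) - 2 * k + 1) =
      ∑ m ∈ Icc s (N - s), a m := by
  have hwidth : ∀ k ∈ Icc s (N / 2), (N : ℤ) - 2 * k + 1 = ∑ _m ∈ Icc k (N - k), 1 := by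
    intro k hk
    rw [mem_Icc] at hk
    rw [sum_const, Nat.card_Icc, nsmul_one]
    omega
  calc _ = ∑ k ∈ Icc s (N / 2), ∑ _m ∈ Icc k (N - k), (a k - a (k - 1)) :=
        sum_congr rfl fun k hk => by rw [hwidth k hk, mul_sum, mul_one]
    _ = ∑ m ∈ Icc s (N - s), ∑ k ∈ Icc s (min m (N - m)), (a k - a (k - 1)) :=
        sum_comm' fun k m => by simp only [mem_Icc]; omega
    _ = _ := sum_congr rfl fun m hm => by
        rw [mem_Icc] at hm
        rw [sum_Icc_sub_pred a (by omega) hs]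
        rcases le_total m (N - m) with h | h
        · rw [min_eq_left h]
        · rw [min_eq_right h, Nat.cast_sub (by omega), hsymm]

theorem sum_range_sum_Icc_choose_mul_choose (n : ℕ) :
    ∑ k ∈ range (n + 1), ∑ m ∈ Icc k n, n.choose m * m.choose k = 3 ^ n := by
  rw [sum_comm' (t' := range (n + 1)) (s' := fun m => range (m + 1))
    fun k m => by simp only [mem_range, mem_Icc]; omega]
  simp only [← mul_sum, Nat.sum_range_choose]
  rw [show 3 = 2 + 1 by rfl, add_pow]
  simp [mul_comm]

/-- Completeness of the α₁-partially-twisted spin-1/2 su(3) chain: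
`∑_{M₂=0}^{L} ∑_{M₁=M₂}^{⌊(L+M₂)/2⌋} (C(L,M₁)C(M₁,M₂) - C(L,M₁-1)C(M₁-1,M₂))
(L - 2M₁ + M₂ + 1) = 3^L`. -/
theorem su3_alpha1_completeness (L : ℕ) :
    ∑ M2 ∈ Finset.range (L + 1), ∑ M1 ∈ Finset.Icc M2 ((L + M2) / 2),
        (intChoose L M1 * intChoose M1 M2 -
            intChoose L ((M1 : ℤ) - 1) * intChoose ((M1 : ℤ) - 1) M2) *
          ((L : ℤ) - 2 * M1 + M2 + 1) = 3 ^ L := by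
  have inner : ∀ M2 ∈ range (L + 1), ∑ M1 ∈ Icc M2 ((L + M2) / 2),
      (intChoose L M1 * intChoose M1 M2 -
          intChoose L ((M1 : ℤ) - 1) * intChoose ((M1 : ℤ) - 1) M2) *
        ((L : ℤ) - 2 * M1 + M2 + 1) = ∑ m ∈ Icc M2 L, intChoose L m * intChoose m M2 := by
    intro M2 _
    have h := sum_Icc_sub_pred_mul_eq_sum_of_symm
      (fun m => intChoose L m * intChoose m M2) (L + M2) M2
      (by rw [intChoose_of_lt (by omega : (M2 : ℤ) - 1 < M2), mul_zero])
      (fun m => by push_cast; exact intChoose_mul_intChoose_reflect L M2 m)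
    rw [Nat.add_sub_cancel] at h
    rw [← h]
    refine sum_congr rfl fun M1 _ => ?_
    push_cast
    ring
  rw [sum_congr rfl inner]
  simp only [intChoose_natCast]
  exact_mod_cast sum_range_sum_Icc_choose_mul_choose L
end

section
/- Let L, M1, M2 be natural numbers with 1 ≤ M1 ≤ L and M2 < M1. Then ∑_{q=1}^{M1} C(L + M2 - M1 + 1, q) · C(M1 - 1, q - 1) · C(q - 1, M2) = C(L, M1) · C(M1 - 1, M2), computed in the natural numbers. -/
/-!
Subset-of-a-subset turns `C(M₁-1, q-1) C(q-1, M₂)` into `C(M₁-1, M₂) C(M₁-1-M₂, M₁-q)`, so the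
sum becomes `C(M₁-1, M₂)` times a Vandermonde convolution of `C(L+M₂-M₁+1, ·)` with
`C(M₁-1-M₂, ·)`, whose value is `C(L, M₁)` because the two upper indices add up to `L`.
The missing `q = 0` term vanishes since `M₁-1-M₂ < M₁`.
-/

open Finset

namespace Nat

theorem choose_mul_choose_eq_choose_mul_choose_sub {n k : ℕ} (s : ℕ) (hkn : k ≤ n) :
    n.choose k * k.choose s = n.choose s * (n - s).choose (n - k) := by
  rcases le_or_gt s k with hsk | hks
  · rw [choose_mul hsk, choose_symm_of_eq_add (by omega : n - s = k - s + (n - k))]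
  rw [choose_eq_zero_of_lt hks, mul_zero, eq_comm]
  rcases le_or_gt s n with hsn | hns
  · rw [choose_eq_zero_of_lt (by omega : n - s < n - k), mul_zero]
  · rw [choose_eq_zero_of_lt hns, zero_mul]

theorem add_choose_eq_sum_Icc_one {m k : ℕ} (n : ℕ) (hmk : m < k) :
    (n + m).choose k = ∑ q ∈ Icc 1 k, n.choose q * m.choose (k - q) := by
  rw [add_choose_eq, Finset.Nat.sum_antidiagonal_eq_sum_range_succ_mk, range_succ_eq_Icc_zero,
    ← insert_Icc_add_one_left_eq_Icc k.zero_le, sum_insert (by simp), zero_add,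
    Nat.sub_zero, choose_eq_zero_of_lt hmk, mul_zero, zero_add]

end Nat

theorem sl12_chu_vandermonde_rewrite_general (L M1 M2 : ℕ) (h2 : M1 ≤ L)
    (h3 : M2 < M1) :
    ∑ q ∈ Finset.Icc 1 M1,
        (L + M2 - M1 + 1).choose q * (M1 - 1).choose (q - 1) * (q - 1).choose M2 =
      L.choose M1 * (M1 - 1).choose M2 := by
  have hsplit : L = (L + M2 - M1 + 1) + (M1 - 1 - M2) := by omega
  have hterm : ∀ q ∈ Icc 1 M1, (M1 - 1).choose (q - 1) * (q - 1).choose M2 =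
      (M1 - 1 - M2).choose (M1 - q) * (M1 - 1).choose M2 := by
    intro q hq
    obtain ⟨hq1, hqM⟩ := mem_Icc.mp hq
    rw [Nat.choose_mul_choose_eq_choose_mul_choose_sub M2 (by omega : q - 1 ≤ M1 - 1),
      show M1 - 1 - (q - 1) = M1 - q by omega, mul_comm]
  calc ∑ q ∈ Icc 1 M1,
        (L + M2 - M1 + 1).choose q * (M1 - 1).choose (q - 1) * (q - 1).choose M2
      = ∑ q ∈ Icc 1 M1, (L + M2 - M1 + 1).choose q * (M1 - 1 - M2).choose (M1 - q) *
          (M1 - 1).choose M2 := by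
        refine sum_congr rfl fun q hq => ?_
        rw [mul_assoc, hterm q hq, ← mul_assoc]
    _ = L.choose M1 * (M1 - 1).choose M2 := by
        rw [← sum_mul, ← Nat.add_choose_eq_sum_Icc_one _ (by omega), ← hsplit]

/-- Chu–Vandermonde-type rewriting of the sl(1|2) multiplicity: for
`1 ≤ M₁ ≤ L` and `M₂ < M₁`,
`∑_{q=1}^{M₁} C(L+M₂-M₁+1, q) C(M₁-1, q-1) C(q-1, M₂) = C(L,M₁) C(M₁-1,M₂)`. -/
theorem sl12_chu_vandermonde_rewrite (L M1 M2 : ℕ) (h1 : 1 ≤ M1) (h2 : M1 ≤ L)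
    (h3 : M2 < M1) :
    ∑ q ∈ Finset.Icc 1 M1,
        (L + M2 - M1 + 1).choose q * (M1 - 1).choose (q - 1) * (q - 1).choose M2 =
      L.choose M1 * (M1 - 1).choose M2 :=
  sl12_chu_vandermonde_rewrite_general L M1 M2 h2 h3
end
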